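/- Resonance lower bound away from the characteristic angles: Let 0 < c < 1 and define θ₀^+, θ₀^− ∈ (0,π) by cos θ₀^± = ±c. There exists a constant c' = c'(c) > 0 such that the following holds. Let ξ₁, ξ₂ ∈ ℝ³ with ξ₁ ≠ 0 and ξ := ξ₁ + ξ₂ ≠ 0, τ₁, τ₂ ∈ ℝ, τ := τ₁ + τ₂, and let N₀, N₁, N₂ ≥ 1 satisfy |ξ| ≤ 2N₀, |ξ₁| ≥ N₁/2 and N₁ ≥ ((1−c)/(8(1+c)))N₂. Suppose A satisfies 2^{20}(1−c)^{−2} < A ≤ 2⁵(1−c)^{−1/2}(N₁N₂)^{1/2}/N₀, and that both |∠(ξ,ξ₁) − θ₀^+| > 2^{10}(1−c)^{−1}A^{−3/4} and |∠(ξ,ξ₁) − θ₀^−| > 2^{10}(1−c)^{−1}A^{−3/4}. Then for either sign ±: max(⟨τ ± c|ξ|⟩, ⟨τ₁ − |ξ₁|⟩, ⟨τ₂ + |ξ₂|⟩) ≥ c' A^{−3/4} |ξ|. -/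

import Mathlib

noncomputable section

open MeasureTheory Real ENNReal
open scoped NNReal


abbrev Sp3 := EuclideanSpace ℝ (Fin 3)

/-- Japanese bracket `⟨r⟩ = (1 + r²)^{1/2}`. -/
def jb (r : ℝ) : ℝ := Real.sqrt (1 + r ^ 2)

/-- Space-time Fourier transform on `ℝ³ × ℝ`. -/
def ftST (u : Sp3 × ℝ → ℂ) (p : Sp3 × ℝ) : ℂ :=
  ∫ q : Sp3 × ℝ, Complex.exp (-Complex.I * (((inner ℝ q.1 p.1 : ℝ) + q.2 * p.2 : ℝ) : ℂ)) * u q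

/-- Inverse space-time Fourier transform on `ℝ³ × ℝ`. -/
def ftSTinv (u : Sp3 × ℝ → ℂ) (q : Sp3 × ℝ) : ℂ :=
  (((2 * Real.pi) ^ (4 : ℕ) : ℝ) : ℂ)⁻¹ *
    ∫ p : Sp3 × ℝ, Complex.exp (Complex.I * (((inner ℝ q.1 p.1 : ℝ) + q.2 * p.2 : ℝ) : ℂ)) * u p

/-- `X^{s,b}`-type norm with sign `σ` and propagation speed `c` (wave case: `c = 1`). -/
def Xnorm (σ c s b : ℝ) (u : Sp3 × ℝ → ℂ) : ℝ≥0∞ :=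
  (∫⁻ p : Sp3 × ℝ,
      ENNReal.ofReal
        (jb ‖p.1‖ ^ (2 * s) * jb (p.2 + σ * c * ‖p.1‖) ^ (2 * b) * ‖ftST u p‖ ^ 2)) ^ (1 / 2 : ℝ)

/-- Dyadic frequency-modulation block `K^{σ,c}_{N,L}`. -/
def Kset (σ c N L : ℝ) : Set (Sp3 × ℝ) :=
  {p | N ≤ jb ‖p.1‖ ∧ jb ‖p.1‖ ≤ 2 * N ∧ L ≤ jb (p.2 + σ * c * ‖p.1‖) ∧
    jb (p.2 + σ * c * ‖p.1‖) ≤ 2 * L}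

/-- Space-time Fourier projection onto the set `K`. -/
def Pproj (K : Set (Sp3 × ℝ)) (u : Sp3 × ℝ → ℂ) : Sp3 × ℝ → ℂ :=
  ftSTinv (K.indicator (ftST u))

def IsDyadic (N : ℝ) : Prop := ∃ k : ℕ, N = 2 ^ k

/-- `Q_ω`: space-time frequencies whose spatial direction lies in `ω ⊆ S²`. -/
def Qcap (ω : Set Sp3) : Set (Sp3 × ℝ) := {p | p.1 ≠ 0 ∧ ‖p.1‖⁻¹ • p.1 ∈ ω}

/-- Angular separation of two subsets of the sphere. -/
def angSep (ω₁ ω₂ : Set Sp3) : ℝ :=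
  sInf {θ : ℝ | ∃ x ∈ ω₁, ∃ y ∈ ω₂, θ = InnerProductGeometry.angle x y}

/-- The trilinear convolution form `I(f,g₁,g₂)`. -/
def trI (f g₁ g₂ : Sp3 × ℝ → ℂ) : ℂ :=
  ∫ q : (Sp3 × ℝ) × (Sp3 × ℝ), f (q.1.1 + q.2.1, q.1.2 + q.2.2) * g₁ q.1 * g₂ q.2


/-!
With `r = ‖ξ‖`, `rᵢ = ‖ξᵢ‖` and `θ = ∠(ξ, ξ₁)`, the law of cosines reads
`(cos θ + σc) · 2 r r₁ = 2 r₁ (σ c r + r₁ - r₂) + (r² - (r₁ - r₂)²)`, and the resonance function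
`σ c r + r₁ - r₂` is a signed sum of the three modulations. So if all three are `≪ A^{-3/4} r`, then
`|cos θ + σc| ≲ A^{-3/4} + r / r₁`, and the frequency constraints give
`r / r₁ ≲ (1-c)^{-1/2} A^{-3/4}`. As `sin ≳ (1-c)^{1/2}` wherever `|cos| ≤ (1+c)/2`, the angle `θ`
is then within `O((1-c)^{-1} A^{-3/4})` of the characteristic angle `arccos (-σc)`, which the
hypotheses exclude. This works with `c' = 1/3`.
-/

open InnerProductGeometry Set

lemma abs_le_jb (x : ℝ) : |x| ≤ jb x := by
  rw [jb, ← sqrt_sq_eq_abs]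
  exact sqrt_le_sqrt (by linarith)

lemma abs_add_sub_le_three_mul_max_jb (τ₁ τ₂ a r₁ r₂ : ℝ) :
    |a + r₁ - r₂| ≤ 3 * max (jb (τ₁ + τ₂ + a)) (max (jb (τ₁ - r₁)) (jb (τ₂ + r₂))) := by
  set M := max (jb (τ₁ + τ₂ + a)) (max (jb (τ₁ - r₁)) (jb (τ₂ + r₂)))
  have h₀ : |τ₁ + τ₂ + a| ≤ M := (abs_le_jb _).trans (le_max_left _ _)
  have h₁ : |τ₁ - r₁| ≤ M := (abs_le_jb _).trans ((le_max_left _ _).trans (le_max_right _ _))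
  have h₂ : |τ₂ + r₂| ≤ M := (abs_le_jb _).trans ((le_max_right _ _).trans (le_max_right _ _))
  rw [abs_le] at h₀ h₁ h₂ ⊢
  constructor <;> linarith [h₀.1, h₀.2, h₁.1, h₁.2, h₂.1, h₂.2]

lemma sqrt_one_sub_sq_mul_sub_le_cos_sub_cos {a b m : ℝ} (ha : 0 ≤ a) (hab : a ≤ b) (hb : b ≤ π)
    (hma : cos a ≤ m) (hmb : -m ≤ cos b) : √(1 - m ^ 2) * (b - a) ≤ cos a - cos b := by
  rcases hab.eq_or_lt with rfl | hlt
  · simp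
  obtain ⟨x, ⟨hax, hxb⟩, hslope⟩ := exists_hasDerivAt_eq_slope cos (fun x ↦ -sin x) hlt
    continuous_cos.continuousOn fun x _ ↦ hasDerivAt_cos x
  have hx₀ : 0 ≤ x := ha.trans hax.le
  have hxπ : x ≤ π := hxb.le.trans hb
  have hcos : cos x ^ 2 ≤ m ^ 2 := sq_le_sq'
    (hmb.trans (cos_le_cos_of_nonneg_of_le_pi hx₀ hb hxb.le))
    ((cos_le_cos_of_nonneg_of_le_pi ha hxπ hax.le).trans hma)
  have hsin : √(1 - m ^ 2) ≤ sin x := by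
    rw [sin_eq_sqrt_one_sub_cos_sq hx₀ hxπ]
    exact sqrt_le_sqrt (by linarith)
  rw [eq_div_iff (sub_ne_zero.2 hlt.ne')] at hslope
  nlinarith

lemma sqrt_one_sub_sq_mul_abs_sub_le_abs_cos_sub_cos {a b m : ℝ} (ha : a ∈ Icc 0 π)
    (hb : b ∈ Icc 0 π) (hma : |cos a| ≤ m) (hmb : |cos b| ≤ m) :
    √(1 - m ^ 2) * |a - b| ≤ |cos a - cos b| := by
  rcases le_total a b with h | h
  · rw [abs_sub_comm a, abs_of_nonneg (sub_nonneg.2 h)]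
    exact (sqrt_one_sub_sq_mul_sub_le_cos_sub_cos ha.1 h hb.2 (abs_le.1 hma).2
      (abs_le.1 hmb).1).trans (le_abs_self _)
  · rw [abs_of_nonneg (sub_nonneg.2 h), abs_sub_comm]
    exact (sqrt_one_sub_sq_mul_sub_le_cos_sub_cos hb.1 h ha.2 (abs_le.1 hmb).2
      (abs_le.1 hma).1).trans (le_abs_self _)

lemma sqrt_one_sub_mul_abs_sub_le_of_abs_cos_sub_le {θ θ₀ c ε : ℝ} (hθ : θ ∈ Icc 0 π)
    (hθ₀ : θ₀ ∈ Icc 0 π) (hc : |cos θ₀| = c) (hε : ε ≤ (1 - c) / 2)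
    (h : |cos θ - cos θ₀| ≤ ε) : √(1 - c) * |θ - θ₀| ≤ 2 * ε := by
  have hc0 : 0 ≤ c := hc ▸ abs_nonneg _
  have hc1 : c ≤ 1 := hc ▸ abs_cos_le_one θ₀
  have hθm : |cos θ| ≤ (1 + c) / 2 := by
    linarith [abs_sub_abs_le_abs_sub (cos θ) (cos θ₀)]
  -- `1 - ((1 + c) / 2) ^ 2 = (1 - c) (3 + c) / 4`
  have hsqrt : √(1 - c) ≤ 2 * √(1 - ((1 + c) / 2) ^ 2) := by
    rw [← sqrt_sq (zero_le_two : (0:ℝ) ≤ 2), ← sqrt_mul (by norm_num)]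
    exact sqrt_le_sqrt (by nlinarith)
  have := sqrt_one_sub_sq_mul_abs_sub_le_abs_cos_sub_cos hθ hθ₀ hθm (by linarith)
  nlinarith [abs_nonneg (θ - θ₀)]

section InnerProductSpace

variable {E : Type*} [NormedAddCommGroup E] [InnerProductSpace ℝ E]

lemma abs_cos_angle_add_mul_le (x y : E) (κ : ℝ) :
    |cos (angle (x + y) x) + κ| * (2 * ‖x + y‖ * ‖x‖) ≤
      2 * ‖x‖ * |κ * ‖x + y‖ + ‖x‖ - ‖y‖| + ‖x + y‖ ^ 2 := by
  have hcos := cos_angle_mul_norm_mul_norm (x + y) x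
  have hy : ‖y‖ ^ 2 = ‖x + y‖ ^ 2 - 2 * inner ℝ (x + y) x + ‖x‖ ^ 2 := by
    rw [← norm_sub_sq_real, add_sub_cancel_left]
  have hxy : (‖x‖ - ‖y‖) ^ 2 ≤ ‖x + y‖ ^ 2 := by
    simpa [sq_abs] using pow_le_pow_left₀ (abs_nonneg _) (abs_norm_sub_norm_le x (-y)) 2
  -- law of cosines, rearranged around the resonance function `κ‖x + y‖ + ‖x‖ - ‖y‖`
  have key : (cos (angle (x + y) x) + κ) * (2 * ‖x + y‖ * ‖x‖) =
      2 * ‖x‖ * (κ * ‖x + y‖ + ‖x‖ - ‖y‖) + (‖x + y‖ ^ 2 - (‖x‖ - ‖y‖) ^ 2) := by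
    linear_combination 2 * hcos + hy
  rw [← abs_of_nonneg (by positivity : 0 ≤ 2 * ‖x + y‖ * ‖x‖), ← abs_mul, key]
  refine (abs_add_le _ _).trans (add_le_add (by rw [abs_mul, abs_of_nonneg (by positivity)]) ?_)
  exact abs_le.2 ⟨by nlinarith [sq_nonneg (‖x‖ - ‖y‖)], by linarith [sq_nonneg (‖x‖ - ‖y‖)]⟩

lemma abs_cos_angle_add_lt_of_max_jb_lt {x y : E} (hx : x ≠ 0) (hxy : x + y ≠ 0) {κ τ₁ τ₂ δ : ℝ}
    (h : 3 * max (jb (τ₁ + τ₂ + κ * ‖x + y‖)) (max (jb (τ₁ - ‖x‖)) (jb (τ₂ + ‖y‖))) <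
      δ * ‖x + y‖) :
    |cos (angle (x + y) x) + κ| < δ + ‖x + y‖ / (2 * ‖x‖) := by
  have hr := norm_pos_iff.2 hxy
  have hr₁ := norm_pos_iff.2 hx
  have hres := abs_add_sub_le_three_mul_max_jb τ₁ τ₂ (κ * ‖x + y‖) ‖x‖ ‖y‖
  refine lt_of_mul_lt_mul_right ((abs_cos_angle_add_mul_le x y κ).trans_lt ?_)
    (by positivity : 0 ≤ 2 * ‖x + y‖ * ‖x‖)
  field_simp
  nlinarith

end InnerProductSpace

lemma one_sub_mul_mul_le_of_le_rpow {c N₀ N₁ N₂ A : ℝ} (hc0 : 0 < c) (hc1 : c < 1)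
    (hN₀ : 0 < N₀) (hN₁ : 0 ≤ N₁) (hN₂ : 0 ≤ N₂) (hA0 : 0 ≤ A)
    (hN : (1 - c) / (8 * (1 + c)) * N₂ ≤ N₁)
    (hA : A ≤ 2 ^ 5 * (1 - c) ^ (-(1 / 2) : ℝ) * (N₁ * N₂) ^ (1 / 2 : ℝ) / N₀) :
    (1 - c) * A * N₀ ≤ 2 ^ 7 * N₁ := by
  have hs := sqrt_pos.2 (sub_pos.2 hc1)
  have hs2 := sq_sqrt (sub_pos.2 hc1).le
  have hN₂' : (1 - c) * N₂ ≤ 16 * N₁ := by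
    rw [div_mul_eq_mul_div, div_le_iff₀ (by positivity)] at hN
    nlinarith
  rw [rpow_neg (sub_pos.2 hc1).le, ← sqrt_eq_rpow, ← sqrt_eq_rpow, le_div_iff₀ hN₀] at hA
  have hAs : √(1 - c) * (A * N₀) ≤ 2 ^ 5 * √(N₁ * N₂) := by
    calc √(1 - c) * (A * N₀) ≤ √(1 - c) * (2 ^ 5 * (√(1 - c))⁻¹ * √(N₁ * N₂)) := by gcongr
      _ = 2 ^ 5 * √(N₁ * N₂) := by field_simp
  have hsq : ((1 - c) * A * N₀) ^ 2 ≤ (2 ^ 7 * N₁) ^ 2 := by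
    have := pow_le_pow_left₀ (by positivity) hAs 2
    rw [mul_pow, mul_pow, hs2, mul_pow, sq_sqrt (by positivity)] at this
    nlinarith
  exact (abs_le_of_sq_le_sq' hsq (by positivity)).2

lemma exists_pow_four_eq_and_rpow_eq {A : ℝ} (hA : 0 < A) :
    ∃ t > 0, A = t ^ 4 ∧ A ^ (-(3 / 4) : ℝ) = (t ^ 3)⁻¹ := by
  refine ⟨A ^ (1 / 4 : ℝ), by positivity, ?_, ?_⟩
  · rw [← Real.rpow_natCast, ← rpow_mul hA.le]
    norm_num
  · rw [← Real.rpow_natCast, ← rpow_mul hA.le, rpow_neg hA.le]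
    norm_num

lemma thirty_two_lt_sqrt_one_sub_mul {c t : ℝ} (hc1 : c < 1) (ht : 0 < t)
    (h : 2 ^ 20 * ((1 - c) ^ 2)⁻¹ < t ^ 4) : 32 < √(1 - c) * t := by
  have hs2 := sq_sqrt (sub_pos.2 hc1).le
  rw [← hs2, ← pow_mul, ← div_eq_mul_inv, div_lt_iff₀ (by positivity)] at h
  refine lt_of_pow_lt_pow_left₀ 4 (by positivity) ?_
  linear_combination h

lemma inv_pow_three_add_div_le {c t : ℝ} (hc0 : 0 ≤ c) (hc1 : c < 1) (hst : 32 < √(1 - c) * t) :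
    (t ^ 3)⁻¹ + 2 ^ 8 / ((1 - c) * t ^ 4) ≤ 9 / (√(1 - c) * t ^ 3) := by
  set s := √(1 - c)
  have hs0 : 0 < s := sqrt_pos.2 (sub_pos.2 hc1)
  have hs1 : s ≤ 1 := sqrt_le_one.2 (by linarith)
  have ht : 0 < t := pos_of_mul_pos_right (by linarith) hs0.le
  rw [← sq_sqrt (sub_pos.2 hc1).le, inv_eq_one_div, div_add_div _ _ (by positivity) (by positivity),
    div_le_div_iff₀ (by positivity) (by positivity)]
  have h : s ^ 2 * t + 2 ^ 8 ≤ 9 * (s * t) := by nlinarith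
  nlinarith [mul_le_mul_of_nonneg_left h (by positivity : 0 ≤ s * t ^ 6)]

lemma abs_sub_lt_of_abs_cos_sub_le {θ θ₀ c t : ℝ} (hθ : θ ∈ Icc 0 π) (hθ₀ : θ₀ ∈ Icc 0 π)
    (hc : |cos θ₀| = c) (hc1 : c < 1) (hst : 32 < √(1 - c) * t)
    (h : |cos θ - cos θ₀| ≤ 9 / (√(1 - c) * t ^ 3)) :
    |θ - θ₀| < 2 ^ 10 * (1 - c)⁻¹ * (t ^ 3)⁻¹ := by
  set s := √(1 - c)
  have hs0 : 0 < s := sqrt_pos.2 (sub_pos.2 hc1)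
  have hs2 : s ^ 2 = 1 - c := sq_sqrt (sub_pos.2 hc1).le
  have ht : 0 < t := pos_of_mul_pos_right (by linarith) hs0.le
  have hsmall : 9 / (s * t ^ 3) ≤ (1 - c) / 2 := by
    rw [← hs2, div_le_div_iff₀ (by positivity) two_pos]
    nlinarith [pow_le_pow_left₀ (by norm_num) hst.le 3]
  have hangle := sqrt_one_sub_mul_abs_sub_le_of_abs_cos_sub_le hθ hθ₀ hc hsmall h
  rw [← hs2, ← mul_lt_mul_iff_right₀ hs0]
  calc s * |θ - θ₀| ≤ 2 * 9 / (s * t ^ 3) := by rw [mul_div_assoc]; exact hangle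
    _ < 2 ^ 10 / (s * t ^ 3) := by gcongr; norm_num
    _ = s * (2 ^ 10 * (s ^ 2)⁻¹ * (t ^ 3)⁻¹) := by field_simp

/-- Resonance lower bound away from the characteristic angles (Lemma 3.2). -/
theorem resonance_away_from_characteristic_angles (c : ℝ) (hc0 : 0 < c) (hc1 : c < 1) :
    ∃ c' : ℝ, 0 < c' ∧
      ∀ (ξ₁ ξ₂ : Sp3) (τ₁ τ₂ : ℝ) (N₀ N₁ N₂ A : ℝ),
        ξ₁ ≠ 0 → ξ₁ + ξ₂ ≠ 0 → 1 ≤ N₀ → 1 ≤ N₁ → 1 ≤ N₂ →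
        ‖ξ₁ + ξ₂‖ ≤ 2 * N₀ → N₁ / 2 ≤ ‖ξ₁‖ → (1 - c) / (8 * (1 + c)) * N₂ ≤ N₁ →
        2 ^ 20 * ((1 - c) ^ 2)⁻¹ < A →
        A ≤ 2 ^ 5 * (1 - c) ^ (-(1 / 2) : ℝ) * (N₁ * N₂) ^ (1 / 2 : ℝ) / N₀ →
        2 ^ 10 * (1 - c)⁻¹ * A ^ (-(3 / 4) : ℝ) <
          |InnerProductGeometry.angle (ξ₁ + ξ₂) ξ₁ - Real.arccos c| →
        2 ^ 10 * (1 - c)⁻¹ * A ^ (-(3 / 4) : ℝ) <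
          |InnerProductGeometry.angle (ξ₁ + ξ₂) ξ₁ - Real.arccos (-c)| →
        ∀ σ : ℝ, (σ = 1 ∨ σ = -1) →
          c' * A ^ (-(3 / 4) : ℝ) * ‖ξ₁ + ξ₂‖ ≤
            max (jb (τ₁ + τ₂ + σ * c * ‖ξ₁ + ξ₂‖))
              (max (jb (τ₁ - ‖ξ₁‖)) (jb (τ₂ + ‖ξ₂‖))) := by
  refine ⟨1 / 3, by norm_num, ?_⟩
  intro ξ₁ ξ₂ τ₁ τ₂ N₀ N₁ N₂ A hξ₁ hξ hN₀ hN₁ hN₂ hξN₀ hξ₁N₁ hN hA hAN hfar_c hfar_neg_c σ hσ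
  have hA0 : 0 < A := hA.trans' (by positivity)
  have hscale := one_sub_mul_mul_le_of_le_rpow hc0 hc1 (by linarith) (by linarith) (by linarith)
    hA0.le hN hAN
  obtain ⟨θ₀, hθ₀, hcos₀, hsep⟩ : ∃ θ₀ ∈ Icc 0 π, cos θ₀ = -(σ * c) ∧
      2 ^ 10 * (1 - c)⁻¹ * A ^ (-(3 / 4) : ℝ) < |angle (ξ₁ + ξ₂) ξ₁ - θ₀| := by
    rcases hσ with rfl | rfl
    · exact ⟨arccos (-c), ⟨arccos_nonneg _, arccos_le_pi _⟩,
        by rw [cos_arccos (by linarith) (by linarith)]; ring, hfar_neg_c⟩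
    · exact ⟨arccos c, ⟨arccos_nonneg _, arccos_le_pi _⟩,
        by rw [cos_arccos (by linarith) (by linarith)]; ring, hfar_c⟩
  obtain ⟨t, ht, rfl, hB⟩ := exists_pow_four_eq_and_rpow_eq hA0
  have hst := thirty_two_lt_sqrt_one_sub_mul hc1 ht hA
  rw [hB] at hsep ⊢
  by_contra! hM
  have hcos := abs_cos_angle_add_lt_of_max_jb_lt hξ₁ hξ (τ₁ := τ₁) (τ₂ := τ₂) (κ := σ * c)
    (δ := (t ^ 3)⁻¹) (by linarith only [hM])
  have hratio : ‖ξ₁ + ξ₂‖ / (2 * ‖ξ₁‖) ≤ 2 ^ 8 / ((1 - c) * t ^ 4) := by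
    rw [div_le_div_iff₀ (by linarith) (by nlinarith)]
    nlinarith only [hscale, hξ₁N₁, mul_le_mul_of_nonneg_right hξN₀ hA0.le, sub_pos.2 hc1]
  refine hsep.not_gt (abs_sub_lt_of_abs_cos_sub_le ⟨angle_nonneg _ _, angle_le_pi _ _⟩ hθ₀ ?_ hc1
    hst ?_)
  · rw [hcos₀, abs_neg, abs_mul, abs_of_pos hc0]
    rcases hσ with rfl | rfl <;> norm_num
  · rw [hcos₀, sub_neg_eq_add]
    exact (hcos.trans_le ((add_le_add_right hratio _).trans
      (inv_pow_three_add_div_le hc0.le hc1 hst))).le
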